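/- In the algebra A_d the following q-determinant identities hold: α_{−−}α_{++} − q²·α_{+−}α_{−+} = A, and A⁻¹·α_{−−}α_{++} − A³·α_{−+}α_{+−} = 1; the second identity says det_{q²}(N) = 1 where N := C⁻¹·M is the twisted generator matrix (with M the 2×2 matrix of generators α_{ij}) and det_{q²} of a 2×2 matrix with rows (a,b),(c,d) is ad − q⁻²bc. -/
import Mathlib


open scoped TensorProduct

noncomputable section

variable (k : Type) [CommRing k] (ω : kˣ)

/-- `A := ω⁻²`. -/
def Aval : k := ((ω⁻¹ : kˣ) : k) ^ 2

/-- `q := ω⁻⁴`. -/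
def qval : k := ((ω⁻¹ : kˣ) : k) ^ 4

/-- `q⁻¹ = ω⁴`. -/
def qival : k := (ω : k) ^ 4

/-- The defining relations (Rd) of the type-`d` algebra `A_d`, on the free algebra on the
four generators `α_{ij}`, `i,j ∈ {+,−}`, encoded as `Fin 2 × Fin 2` with `0 = +`, `1 = −`. -/
inductive AdRel : FreeAlgebra k (Fin 2 × Fin 2) → FreeAlgebra k (Fin 2 × Fin 2) → Prop
  | d1 : AdRel (FreeAlgebra.ι k (1, 0) * FreeAlgebra.ι k (0, 0))
      (FreeAlgebra.ι k (0, 0) * FreeAlgebra.ι k (1, 0) +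
        ((qval k ω - qival k ω) * (qval k ω) ^ 2) •
          (FreeAlgebra.ι k (0, 1) * FreeAlgebra.ι k (1, 1)))
  | d2 : AdRel (FreeAlgebra.ι k (0, 1) * FreeAlgebra.ι k (0, 0))
      ((qval k ω) ^ 2 • (FreeAlgebra.ι k (0, 0) * FreeAlgebra.ι k (0, 1)))
  | d3 : AdRel (FreeAlgebra.ι k (1, 1) * FreeAlgebra.ι k (1, 0))
      (FreeAlgebra.ι k (1, 0) * FreeAlgebra.ι k (1, 1) +
        ((qval k ω - qival k ω) * (qval k ω) ^ 2) •
          (FreeAlgebra.ι k (0, 1) * FreeAlgebra.ι k (1, 1)))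
  | d4 : AdRel (FreeAlgebra.ι k (1, 1) * FreeAlgebra.ι k (0, 1))
      ((qval k ω) ^ 2 • (FreeAlgebra.ι k (0, 1) * FreeAlgebra.ι k (1, 1)))
  | d5 : AdRel (FreeAlgebra.ι k (0, 1) * FreeAlgebra.ι k (1, 0))
      (FreeAlgebra.ι k (0, 0) * FreeAlgebra.ι k (1, 1) -
        ((qval k ω - qival k ω) ^ 2) • (FreeAlgebra.ι k (0, 1) * FreeAlgebra.ι k (0, 1)) -
        algebraMap k (FreeAlgebra k (Fin 2 × Fin 2)) (Aval k ω))
  | d6 : AdRel (FreeAlgebra.ι k (1, 0) * FreeAlgebra.ι k (0, 1))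
      (FreeAlgebra.ι k (0, 0) * FreeAlgebra.ι k (1, 1) -
        ((qval k ω - qival k ω) ^ 2) • (FreeAlgebra.ι k (0, 1) * FreeAlgebra.ι k (0, 1)) -
        algebraMap k (FreeAlgebra k (Fin 2 × Fin 2)) (Aval k ω))
  | d7 : AdRel (FreeAlgebra.ι k (1, 1) * FreeAlgebra.ι k (0, 0))
      ((qval k ω) ^ 2 • (FreeAlgebra.ι k (0, 0) * FreeAlgebra.ι k (1, 1)) -
        ((qval k ω) ^ 2 * (qval k ω - qival k ω) ^ 2) •
          (FreeAlgebra.ι k (0, 1) * FreeAlgebra.ι k (0, 1)) +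
        algebraMap k (FreeAlgebra k (Fin 2 × Fin 2)) (Aval k ω * (1 - (qval k ω) ^ 2)))

/-- The algebra `A_d` presented by the relations (Rd). -/
abbrev AdAlg := RingQuot (AdRel k ω)

/-- The generators `α_{ij}` of `A_d`. -/
def xD (ij : Fin 2 × Fin 2) : AdAlg k ω :=
  RingQuot.mkAlgHom k (AdRel k ω) (FreeAlgebra.ι k ij)

/-- In the algebra `A_d` the q-determinant identities hold:
`α_{−−}α_{++} − q²·α_{+−}α_{−+} = A` and `A⁻¹·α_{−−}α_{++} − A³·α_{−+}α_{+−} = 1`;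
the second identity says `det_{q²}(N) = 1` where `N := C⁻¹·M` is the twisted generator
matrix (with `M` the matrix of generators) and `det_{q²}` of a matrix with rows
`(a,b),(c,d)` is `ad − q⁻²bc` (here `q⁻² = ω⁸`). -/
theorem stmt12 (k : Type) [CommRing k] (ω : kˣ) :
    let ωi : k := ((ω⁻¹ : kˣ) : k)
    let M : Matrix (Fin 2) (Fin 2) (AdAlg k ω) := Matrix.of fun i j => xD k ω (i, j)
    let Cinv : Matrix (Fin 2) (Fin 2) (AdAlg k ω) :=
      (!![0, -ωi ^ 5; ωi, 0]).map (algebraMap k (AdAlg k ω))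
    let N : Matrix (Fin 2) (Fin 2) (AdAlg k ω) := Cinv * M
    xD k ω (1, 1) * xD k ω (0, 0) - (qval k ω) ^ 2 • (xD k ω (0, 1) * xD k ω (1, 0)) =
      algebraMap k (AdAlg k ω) (Aval k ω) ∧
    ((ω : k) ^ 2) • (xD k ω (1, 1) * xD k ω (0, 0)) -
      ((Aval k ω) ^ 3) • (xD k ω (1, 0) * xD k ω (0, 1)) = 1 ∧
    N 0 0 * N 1 1 - ((ω : k) ^ 8) • (N 0 1 * N 1 0) = 1 := by
  intro ωi M Cinv N
  have hωi : (ω : k) * ((ω⁻¹ : kˣ) : k) = 1 := by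
    rw [← Units.val_mul, mul_inv_cancel, Units.val_one]
  have h5 := RingQuot.mkAlgHom_rel k (AdRel.d5 (k := k) (ω := ω))
  have h6 := RingQuot.mkAlgHom_rel k (AdRel.d6 (k := k) (ω := ω))
  have h7 := RingQuot.mkAlgHom_rel k (AdRel.d7 (k := k) (ω := ω))
  simp only [map_mul, map_add, map_sub, map_smul, AlgHom.commutes] at h5 h6 h7
  simp only [show ∀ ij, RingQuot.mkAlgHom k (AdRel k ω) (FreeAlgebra.ι k ij) = xD k ω ij
    from fun _ => rfl] at h5 h6 h7
  refine ⟨?_, ?_, ?_⟩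
  · rw [h7, h5]
    simp only [Algebra.algebraMap_eq_smul_one, map_one, mul_sub, sub_mul, smul_mul_assoc,
      mul_smul_comm, smul_smul, mul_one, one_mul, smul_sub, smul_add]
    match_scalars <;> ring
  · rw [h7, h6]
    simp only [Algebra.algebraMap_eq_smul_one, map_one, mul_sub, sub_mul, smul_mul_assoc,
      mul_smul_comm, smul_smul, mul_one, one_mul, smul_sub, smul_add]
    rw [show (1 : AdAlg k ω) = (1 : k) • (1 : AdAlg k ω) from (one_smul k _).symm]
    simp only [qval, qival, Aval]
    match_scalars
    · linear_combination (((ω⁻¹ : kˣ) : k) ^ 6 * ((ω : k) * ((ω⁻¹ : kˣ) : k) + 1)) * hωi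
    · linear_combination (-((((ω⁻¹ : kˣ) : k) ^ 4 - (ω : k) ^ 4) ^ 2 * ((ω⁻¹ : kˣ) : k) ^ 6 *
        ((ω : k) * ((ω⁻¹ : kˣ) : k) + 1))) * hωi
    · linear_combination ((1 - ((ω⁻¹ : kˣ) : k) ^ 8) * ((ω : k) * ((ω⁻¹ : kˣ) : k) + 1)) * hωi
  · have e : ∀ (r : k) (x : AdAlg k ω), algebraMap k (AdAlg k ω) r * x = r • x :=
      fun r x => (Algebra.smul_def r x).symm
    simp only [N, Cinv, M, Matrix.mul_apply, Fin.sum_univ_two, Matrix.map_apply,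
      Matrix.of_apply, Matrix.cons_val', Matrix.cons_val_zero, Matrix.cons_val_one,
      Matrix.head_cons, Matrix.head_fin_const, Matrix.empty_val',
      Matrix.cons_val_fin_one, map_zero, map_neg, zero_mul, mul_zero, zero_add, add_zero, e,
      smul_mul_assoc, mul_smul_comm, smul_smul, neg_smul, smul_neg, neg_mul, mul_neg,
      neg_neg, sub_neg_eq_add, zero_smul, zero_add, add_zero, mul_add, add_mul]
    rw [h7, h6]
    simp only [Algebra.algebraMap_eq_smul_one, map_one, mul_sub, sub_mul, smul_mul_assoc,
      mul_smul_comm, smul_smul, mul_one, one_mul, smul_sub, smul_add]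
    rw [show (1 : AdAlg k ω) = (1 : k) • (1 : AdAlg k ω) from (one_smul k _).symm]
    simp only [qval, qival, Aval]
    unfold ωi
    match_scalars
    · linear_combination (((ω⁻¹ : kˣ) : k) ^ 6 *
        (1 + (ω : k) * ((ω⁻¹ : kˣ) : k) + ((ω : k) * ((ω⁻¹ : kˣ) : k)) ^ 2 + ((ω : k) * ((ω⁻¹ : kˣ) : k)) ^ 3 + ((ω : k) * ((ω⁻¹ : kˣ) : k)) ^ 4 + ((ω : k) * ((ω⁻¹ : kˣ) : k)) ^ 5 + ((ω : k) * ((ω⁻¹ : kˣ) : k)) ^ 6 + ((ω : k) * ((ω⁻¹ : kˣ) : k)) ^ 7)) * hωi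
    · linear_combination (-((((ω⁻¹ : kˣ) : k) ^ 4 - (ω : k) ^ 4) ^ 2 * ((ω⁻¹ : kˣ) : k) ^ 6 *
        (1 + (ω : k) * ((ω⁻¹ : kˣ) : k) + ((ω : k) * ((ω⁻¹ : kˣ) : k)) ^ 2 + ((ω : k) * ((ω⁻¹ : kˣ) : k)) ^ 3 + ((ω : k) * ((ω⁻¹ : kˣ) : k)) ^ 4 + ((ω : k) * ((ω⁻¹ : kˣ) : k)) ^ 5 + ((ω : k) * ((ω⁻¹ : kˣ) : k)) ^ 6 + ((ω : k) * ((ω⁻¹ : kˣ) : k)) ^ 7))) * hωi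
    · linear_combination ((1 - ((ω⁻¹ : kˣ) : k) ^ 8) *
        (1 + (ω : k) * ((ω⁻¹ : kˣ) : k) + ((ω : k) * ((ω⁻¹ : kˣ) : k)) ^ 2 + ((ω : k) * ((ω⁻¹ : kˣ) : k)) ^ 3 + ((ω : k) * ((ω⁻¹ : kˣ) : k)) ^ 4 + ((ω : k) * ((ω⁻¹ : kˣ) : k)) ^ 5 + ((ω : k) * ((ω⁻¹ : kˣ) : k)) ^ 6 + ((ω : k) * ((ω⁻¹ : kˣ) : k)) ^ 7)) * hωi
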